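/- The graph obtained from the complete graph K_4 by subdividing one edge (replacing it by a path of length 2 through a new vertex) has star chromatic index exactly 6. -/
import Mathlib

/-- A star edge-coloring of `G`: a proper edge-coloring (distinct adjacent edges get
distinct colors) such that no path of length four and no cycle of length four is
bichromatic (colored by only two colors). -/
def IsStarEdgeColoring {V : Type*} {C : Type*} (G : SimpleGraph V) (σ : Sym2 V → C) : Prop :=
  (∀ ⦃e f : Sym2 V⦄, e ∈ G.edgeSet → f ∈ G.edgeSet → e ≠ f →
      (∃ v, v ∈ e ∧ v ∈ f) → σ e ≠ σ f) ∧
  (∀ ⦃u v : V⦄ (p : G.Walk u v), p.IsPath → p.length = 4 →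
      ¬ ∃ a b : C, ∀ e ∈ p.edges, σ e = a ∨ σ e = b) ∧
  (∀ ⦃u : V⦄ (p : G.Walk u u), p.IsCycle → p.length = 4 →
      ¬ ∃ a b : C, ∀ e ∈ p.edges, σ e = a ∨ σ e = b)

/-- A set of edges is a matching if its edges are pairwise non-adjacent. -/
def IsMatchingSet {V : Type*} (M : Set (Sym2 V)) : Prop :=
  ∀ e ∈ M, ∀ f ∈ M, e ≠ f → ∀ v : V, v ∈ e → v ∉ f

/-- Two edges are adjacent (at distance `1` in the line graph). -/
def EdgesAdj {V : Type*} (e f : Sym2 V) : Prop :=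
  e ≠ f ∧ ∃ v : V, v ∈ e ∧ v ∈ f

/-- Two edges of `G` are at distance at most `2` in the line graph of `G`. -/
def EdgeDistLE2 {V : Type*} (G : SimpleGraph V) (e f : Sym2 V) : Prop :=
  EdgesAdj e f ∨ ∃ g ∈ G.edgeSet, EdgesAdj e g ∧ EdgesAdj g f

/-- The graph obtained from `K_4` (on vertices `0, 1, 2, 3`) by subdividing the edge
`{0, 1}` with the new vertex `4`. -/
def K4SubdividedEdge : SimpleGraph (Fin 5) :=
  SimpleGraph.fromEdgeSet
    {s(0, 2), s(0, 3), s(1, 2), s(1, 3), s(2, 3), s(0, 4), s(1, 4)}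

/-! ### Auxiliary machinery -/

/-- Boolean adjacency test for `K4SubdividedEdge`. -/
def adjB (a b : Fin 5) : Bool :=
  [((0:Fin 5),(2:Fin 5)),(0,3),(1,2),(1,3),(2,3),(0,4),(1,4)].any
    fun p => (p.1 == a && p.2 == b) || (p.1 == b && p.2 == a)

lemma adj_iff (a b : Fin 5) : K4SubdividedEdge.Adj a b ↔ adjB a b = true := by
  rw [K4SubdividedEdge, SimpleGraph.fromEdgeSet_adj]
  simp only [Set.mem_insert_iff, Set.mem_singleton_iff]
  revert a b
  decide

lemma adjOf {a b : Fin 5} (h : adjB a b = true) : K4SubdividedEdge.Adj a b :=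
  (adj_iff a b).mpr h

lemma memOf {a b : Fin 5} (h : adjB a b = true) :
    s(a, b) ∈ K4SubdividedEdge.edgeSet :=
  (SimpleGraph.mem_edgeSet _).mpr (adjOf h)

/-- Decomposition of a walk of length 4. -/
lemma walk_len4 {V : Type*} {G : SimpleGraph V} {u v : V} (p : G.Walk u v) (h : p.length = 4) :
    ∃ a b c : V, ∃ (_ : G.Adj u a) (_ : G.Adj a b) (_ : G.Adj b c) (_ : G.Adj c v),
      p.edges = [s(u,a), s(a,b), s(b,c), s(c,v)] ∧ p.support = [u,a,b,c,v] := by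
  cases p with
  | nil => simp at h
  | cons h1 q =>
    cases q with
    | nil => simp at h
    | cons h2 r =>
      cases r with
      | nil => simp at h
      | cons h3 s =>
        cases s with
        | nil => simp at h
        | cons h4 t =>
          cases t with
          | nil => exact ⟨_, _, _, h1, h2, h3, h4, rfl, rfl⟩
          | cons h5 w => simp [SimpleGraph.Walk.length_cons] at h

/-- The color table for the 6-coloring. -/
def σB : Fin 5 → Fin 5 → Fin 6 := fun a b =>
  match a, b with
  | 0, 2 => 0 | 2, 0 => 0
  | 0, 3 => 1 | 3, 0 => 1
  | 0, 4 => 2 | 4, 0 => 2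
  | 1, 2 => 1 | 2, 1 => 1
  | 1, 3 => 3 | 3, 1 => 3
  | 1, 4 => 4 | 4, 1 => 4
  | 2, 3 => 5 | 3, 2 => 5
  | _, _ => 0

/-- The explicit star 6-edge-coloring. -/
def σ6 : Sym2 (Fin 5) → Fin 6 := Sym2.lift ⟨σB, by decide⟩

lemma σ6_proper : ∀ a b c d : Fin 5, adjB a b = true → adjB c d = true →
    s(a,b) ≠ s(c,d) → (∃ v, v ∈ s(a,b) ∧ v ∈ s(c,d)) → σ6 s(a,b) ≠ σ6 s(c,d) := by decide

set_option synthInstance.maxSize 1000 in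
set_option maxRecDepth 10000 in
lemma σ6_path : ∀ v0 v1 : Fin 5, adjB v0 v1 = true → ∀ v2 : Fin 5, adjB v1 v2 = true → v0 ≠ v2 →
    ∀ v3 : Fin 5, adjB v2 v3 = true → v0 ≠ v3 → v1 ≠ v3 →
    ∀ v4 : Fin 5, adjB v3 v4 = true → v0 ≠ v4 → v1 ≠ v4 → v2 ≠ v4 →
    ∀ x y : Fin 6, (σ6 s(v0,v1) = x ∨ σ6 s(v0,v1) = y) → (σ6 s(v1,v2) = x ∨ σ6 s(v1,v2) = y) →
      (σ6 s(v2,v3) = x ∨ σ6 s(v2,v3) = y) → (σ6 s(v3,v4) = x ∨ σ6 s(v3,v4) = y) → False := by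
  decide

set_option synthInstance.maxSize 1000 in
set_option maxRecDepth 10000 in
lemma σ6_cycle : ∀ v0 v1 : Fin 5, adjB v0 v1 = true → ∀ v2 : Fin 5, adjB v1 v2 = true → v0 ≠ v2 →
    ∀ v3 : Fin 5, adjB v2 v3 = true → adjB v3 v0 = true → v1 ≠ v3 →
    ∀ x y : Fin 6, (σ6 s(v0,v1) = x ∨ σ6 s(v0,v1) = y) → (σ6 s(v1,v2) = x ∨ σ6 s(v1,v2) = y) →
      (σ6 s(v2,v3) = x ∨ σ6 s(v2,v3) = y) → (σ6 s(v3,v0) = x ∨ σ6 s(v3,v0) = y) → False := by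
  decide

lemma σ6_star : IsStarEdgeColoring K4SubdividedEdge σ6 := by
  refine ⟨?_, ?_, ?_⟩
  · intro e f he hf hne hshare
    induction e using Sym2.ind with | _ a b =>
    induction f using Sym2.ind with | _ c d =>
    rw [SimpleGraph.mem_edgeSet, adj_iff] at he hf
    exact σ6_proper a b c d he hf hne hshare
  · intro u v p hp hl hbad
    obtain ⟨a, b, c, h1, h2, h3, h4, hE, hS⟩ := walk_len4 p hl
    obtain ⟨x, y, hxy⟩ := hbad
    rw [hE] at hxy
    have hnd := hp.support_nodup
    rw [hS] at hnd
    simp only [List.nodup_cons, List.mem_cons, List.not_mem_nil, or_false,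
      not_or, List.nodup_nil, and_true] at hnd
    obtain ⟨⟨hua, hub, huc, huv⟩, ⟨hab, hac, hav⟩, ⟨hbc, hbv⟩, hcv⟩ := hnd
    rw [adj_iff] at h1 h2 h3 h4
    exact σ6_path u a h1 b h2 hub c h3 huc (fun h => hac h) v h4 huv hav hbv x y
      (hxy _ (by simp)) (hxy _ (by simp)) (hxy _ (by simp)) (hxy _ (by simp))
  · intro u p hp hl hbad
    obtain ⟨a, b, c, h1, h2, h3, h4, hE, hS⟩ := walk_len4 p hl
    obtain ⟨x, y, hxy⟩ := hbad
    rw [hE] at hxy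
    have hnd := hp.2
    rw [hS] at hnd
    simp only [List.tail_cons, List.nodup_cons, List.mem_cons, List.not_mem_nil, or_false,
      not_or, List.nodup_nil, and_true] at hnd
    obtain ⟨⟨hab, hac, hau⟩, ⟨hbc, hbu⟩, hcu⟩ := hnd
    rw [adj_iff] at h1 h2 h3 h4
    exact σ6_cycle u a h1 b h2 (fun h => hbu h.symm) c h3 h4 hac x y
      (hxy _ (by simp)) (hxy _ (by simp)) (hxy _ (by simp)) (hxy _ (by simp))

/-! ### Nonexistence machinery -/

/-- Any star edge-coloring forbids the "alternating" pattern on a path of length 4. -/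
lemma path_constraint {C : Type*} {σ : Sym2 (Fin 5) → C}
    (hσ : IsStarEdgeColoring K4SubdividedEdge σ)
    {v0 v1 v2 v3 v4 : Fin 5} (h01 : adjB v0 v1 = true) (h12 : adjB v1 v2 = true)
    (h23 : adjB v2 v3 = true) (h34 : adjB v3 v4 = true)
    (hnd : ([v0, v1, v2, v3, v4] : List (Fin 5)).Nodup) :
    ¬(σ s(v0,v1) = σ s(v2,v3) ∧ σ s(v1,v2) = σ s(v3,v4)) := by
  rintro ⟨hA, hB⟩
  refine hσ.2.1 (u := v0) (v := v4)
    (.cons (adjOf h01) (.cons (adjOf h12) (.cons (adjOf h23) (.cons (adjOf h34) .nil))))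
    ?_ rfl ⟨σ s(v0,v1), σ s(v1,v2), ?_⟩
  · rw [SimpleGraph.Walk.isPath_def]
    exact hnd
  · intro e he
    simp only [SimpleGraph.Walk.edges_cons, SimpleGraph.Walk.edges_nil, List.mem_cons,
      List.not_mem_nil, or_false] at he
    rcases he with rfl | rfl | rfl | rfl
    · left; rfl
    · right; rfl
    · left; exact hA.symm
    · right; exact hB.symm

/-- Any star edge-coloring forbids the "alternating" pattern on a cycle of length 4. -/
lemma cycle_constraint {C : Type*} {σ : Sym2 (Fin 5) → C}
    (hσ : IsStarEdgeColoring K4SubdividedEdge σ)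
    {v0 v1 v2 v3 : Fin 5} (h01 : adjB v0 v1 = true) (h12 : adjB v1 v2 = true)
    (h23 : adjB v2 v3 = true) (h30 : adjB v3 v0 = true)
    (hnd : ([v1, v2, v3, v0] : List (Fin 5)).Nodup)
    (hed : ([s(v0,v1), s(v1,v2), s(v2,v3), s(v3,v0)] : List (Sym2 (Fin 5))).Nodup) :
    ¬(σ s(v0,v1) = σ s(v2,v3) ∧ σ s(v1,v2) = σ s(v3,v0)) := by
  rintro ⟨hA, hB⟩
  refine hσ.2.2 (u := v0)
    (.cons (adjOf h01) (.cons (adjOf h12) (.cons (adjOf h23) (.cons (adjOf h30) .nil))))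
    ⟨⟨⟨hed⟩, by simp⟩, hnd⟩ rfl ⟨σ s(v0,v1), σ s(v1,v2), ?_⟩
  · intro e he
    simp only [SimpleGraph.Walk.edges_cons, SimpleGraph.Walk.edges_nil, List.mem_cons,
      List.not_mem_nil, or_false] at he
    rcases he with rfl | rfl | rfl | rfl
    · left; rfl
    · right; rfl
    · left; exact hA.symm
    · right; exact hB.symm

set_option synthInstance.maxSize 100000 in
set_option maxRecDepth 100000 in
set_option maxHeartbeats 2000000 in
lemma key5 : ∀ c0 c1 : Fin 5, c0 ≠ c1 → ∀ c2 : Fin 5, c0 ≠ c2 → c1 ≠ c2 →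
    ∀ c3 : Fin 5, c0 ≠ c3 →
    ∀ c4 : Fin 5, c3 ≠ c4 → c1 ≠ c4 → ¬(c3 = c1 ∧ c4 = c2) → ¬(c4 = c0 ∧ c3 = c2) → ¬(c0 = c4 ∧ c3 = c1) →
    ∀ c5 : Fin 5, c3 ≠ c5 → c4 ≠ c5 → c2 ≠ c5 → ¬(c0 = c4 ∧ c1 = c5) → ¬(c1 = c3 ∧ c0 = c5) →
      ¬(c0 = c5 ∧ c2 = c4) → ¬(c3 = c2 ∧ c5 = c1) → ¬(c0 = c5 ∧ c3 = c2) → ¬(c1 = c5 ∧ c4 = c2) →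
    ∀ c6 : Fin 5, c0 ≠ c6 → c3 ≠ c6 → c1 ≠ c6 → c4 ≠ c6 → ¬(c0 = c4 ∧ c6 = c5) → ¬(c1 = c3 ∧ c6 = c5) →
      ¬(c3 = c1 ∧ c6 = c2) → ¬(c4 = c0 ∧ c6 = c2) → ¬(c2 = c3 ∧ c5 = c6) → ¬(c2 = c4 ∧ c5 = c6) →
      ¬(c5 = c0 ∧ c2 = c6) → ¬(c5 = c1 ∧ c2 = c6) → False := by decide

/-- The graph obtained from `K_4` by subdividing one edge has star chromatic index
exactly 6: it has a star edge-coloring with 6 colors but none with 5 colors. -/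
theorem K4_subdivided_star_chromatic_index_eq_six :
    (∃ σ : Sym2 (Fin 5) → Fin 6, IsStarEdgeColoring K4SubdividedEdge σ) ∧
      ¬ ∃ σ : Sym2 (Fin 5) → Fin 5, IsStarEdgeColoring K4SubdividedEdge σ := by
  constructor
  · exact ⟨σ6, σ6_star⟩
  · rintro ⟨σ, hσ⟩
    -- properness facts ; c0=σ02, c1=σ03, c2=σ04, c3=σ12, c4=σ13, c5=σ14, c6=σ23
    have prop : ∀ a b c d w : Fin 5, adjB a b = true → adjB c d = true →
        s(a,b) ≠ s(c,d) → w ∈ s(a,b) → w ∈ s(c,d) → σ s(a,b) ≠ σ s(c,d) :=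
      fun a b c d w h1 h2 h3 h4 h5 => hσ.1 (memOf h1) (memOf h2) h3 ⟨w, h4, h5⟩
    have n1 : σ s(0,2) ≠ σ s(0,3) := prop 0 2 0 3 0 rfl rfl (by decide) (by decide) (by decide)
    have n2 : σ s(0,2) ≠ σ s(0,4) := prop 0 2 0 4 0 rfl rfl (by decide) (by decide) (by decide)
    have n3 : σ s(0,3) ≠ σ s(0,4) := prop 0 3 0 4 0 rfl rfl (by decide) (by decide) (by decide)
    have n4 : σ s(0,2) ≠ σ s(1,2) := prop 0 2 1 2 2 rfl rfl (by decide) (by decide) (by decide)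
    have n5 : σ s(1,2) ≠ σ s(1,3) := prop 1 2 1 3 1 rfl rfl (by decide) (by decide) (by decide)
    have n6 : σ s(0,3) ≠ σ s(1,3) := prop 0 3 1 3 3 rfl rfl (by decide) (by decide) (by decide)
    have n7 : σ s(1,2) ≠ σ s(1,4) := prop 1 2 1 4 1 rfl rfl (by decide) (by decide) (by decide)
    have n8 : σ s(1,3) ≠ σ s(1,4) := prop 1 3 1 4 1 rfl rfl (by decide) (by decide) (by decide)
    have n9 : σ s(0,4) ≠ σ s(1,4) := prop 0 4 1 4 4 rfl rfl (by decide) (by decide) (by decide)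
    have n10 : σ s(0,2) ≠ σ s(2,3) := prop 0 2 2 3 2 rfl rfl (by decide) (by decide) (by decide)
    have n11 : σ s(1,2) ≠ σ s(2,3) := prop 1 2 2 3 2 rfl rfl (by decide) (by decide) (by decide)
    have n12 : σ s(0,3) ≠ σ s(2,3) := prop 0 3 2 3 3 rfl rfl (by decide) (by decide) (by decide)
    have n13 : σ s(1,3) ≠ σ s(2,3) := prop 1 3 2 3 3 rfl rfl (by decide) (by decide) (by decide)
    have P0 : ¬(σ s(0,2) = σ s(1,3) ∧ σ s(2,3) = σ s(1,4)) := by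
      have h := path_constraint hσ (v0:=0) (v1:=2) (v2:=3) (v3:=1) (v4:=4) rfl rfl rfl rfl (by decide)
      rw [show (s(3,1) : Sym2 (Fin 5)) = s(1,3) from Sym2.eq_swap] at h
      exact h
    have P1 : ¬(σ s(0,3) = σ s(1,2) ∧ σ s(2,3) = σ s(1,4)) := by
      have h := path_constraint hσ (v0:=0) (v1:=3) (v2:=2) (v3:=1) (v4:=4) rfl rfl rfl rfl (by decide)
      rw [show (s(3,2) : Sym2 (Fin 5)) = s(2,3) from Sym2.eq_swap] at h
      rw [show (s(2,1) : Sym2 (Fin 5)) = s(1,2) from Sym2.eq_swap] at h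
      exact h
    have P2 : ¬(σ s(0,4) = σ s(1,2) ∧ σ s(1,4) = σ s(2,3)) := by
      have h := path_constraint hσ (v0:=0) (v1:=4) (v2:=1) (v3:=2) (v4:=3) rfl rfl rfl rfl (by decide)
      rw [show (s(4,1) : Sym2 (Fin 5)) = s(1,4) from Sym2.eq_swap] at h
      exact h
    have P3 : ¬(σ s(0,4) = σ s(1,3) ∧ σ s(1,4) = σ s(2,3)) := by
      have h := path_constraint hσ (v0:=0) (v1:=4) (v2:=1) (v3:=3) (v4:=2) rfl rfl rfl rfl (by decide)
      rw [show (s(4,1) : Sym2 (Fin 5)) = s(1,4) from Sym2.eq_swap] at h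
      rw [show (s(3,2) : Sym2 (Fin 5)) = s(2,3) from Sym2.eq_swap] at h
      exact h
    have P4 : ¬(σ s(1,2) = σ s(0,3) ∧ σ s(2,3) = σ s(0,4)) := by
      have h := path_constraint hσ (v0:=1) (v1:=2) (v2:=3) (v3:=0) (v4:=4) rfl rfl rfl rfl (by decide)
      rw [show (s(3,0) : Sym2 (Fin 5)) = s(0,3) from Sym2.eq_swap] at h
      exact h
    have P5 : ¬(σ s(1,3) = σ s(0,2) ∧ σ s(2,3) = σ s(0,4)) := by
      have h := path_constraint hσ (v0:=1) (v1:=3) (v2:=2) (v3:=0) (v4:=4) rfl rfl rfl rfl (by decide)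
      rw [show (s(3,2) : Sym2 (Fin 5)) = s(2,3) from Sym2.eq_swap] at h
      rw [show (s(2,0) : Sym2 (Fin 5)) = s(0,2) from Sym2.eq_swap] at h
      exact h
    have P6 : ¬(σ s(1,4) = σ s(0,2) ∧ σ s(0,4) = σ s(2,3)) := by
      have h := path_constraint hσ (v0:=1) (v1:=4) (v2:=0) (v3:=2) (v4:=3) rfl rfl rfl rfl (by decide)
      rw [show (s(4,0) : Sym2 (Fin 5)) = s(0,4) from Sym2.eq_swap] at h
      exact h
    have P7 : ¬(σ s(1,4) = σ s(0,3) ∧ σ s(0,4) = σ s(2,3)) := by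
      have h := path_constraint hσ (v0:=1) (v1:=4) (v2:=0) (v3:=3) (v4:=2) rfl rfl rfl rfl (by decide)
      rw [show (s(4,0) : Sym2 (Fin 5)) = s(0,4) from Sym2.eq_swap] at h
      rw [show (s(3,2) : Sym2 (Fin 5)) = s(2,3) from Sym2.eq_swap] at h
      exact h
    have P8 : ¬(σ s(0,2) = σ s(1,3) ∧ σ s(0,3) = σ s(1,4)) := by
      have h := path_constraint hσ (v0:=2) (v1:=0) (v2:=3) (v3:=1) (v4:=4) rfl rfl rfl rfl (by decide)
      rw [show (s(2,0) : Sym2 (Fin 5)) = s(0,2) from Sym2.eq_swap] at h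
      rw [show (s(3,1) : Sym2 (Fin 5)) = s(1,3) from Sym2.eq_swap] at h
      exact h
    have P9 : ¬(σ s(0,2) = σ s(1,4) ∧ σ s(0,4) = σ s(1,3)) := by
      have h := path_constraint hσ (v0:=2) (v1:=0) (v2:=4) (v3:=1) (v4:=3) rfl rfl rfl rfl (by decide)
      rw [show (s(2,0) : Sym2 (Fin 5)) = s(0,2) from Sym2.eq_swap] at h
      rw [show (s(4,1) : Sym2 (Fin 5)) = s(1,4) from Sym2.eq_swap] at h
      exact h
    have P10 : ¬(σ s(1,2) = σ s(0,3) ∧ σ s(1,3) = σ s(0,4)) := by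
      have h := path_constraint hσ (v0:=2) (v1:=1) (v2:=3) (v3:=0) (v4:=4) rfl rfl rfl rfl (by decide)
      rw [show (s(2,1) : Sym2 (Fin 5)) = s(1,2) from Sym2.eq_swap] at h
      rw [show (s(3,0) : Sym2 (Fin 5)) = s(0,3) from Sym2.eq_swap] at h
      exact h
    have P11 : ¬(σ s(1,2) = σ s(0,4) ∧ σ s(1,4) = σ s(0,3)) := by
      have h := path_constraint hσ (v0:=2) (v1:=1) (v2:=4) (v3:=0) (v4:=3) rfl rfl rfl rfl (by decide)
      rw [show (s(2,1) : Sym2 (Fin 5)) = s(1,2) from Sym2.eq_swap] at h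
      rw [show (s(4,0) : Sym2 (Fin 5)) = s(0,4) from Sym2.eq_swap] at h
      exact h
    have P12 : ¬(σ s(0,3) = σ s(1,2) ∧ σ s(0,2) = σ s(1,4)) := by
      have h := path_constraint hσ (v0:=3) (v1:=0) (v2:=2) (v3:=1) (v4:=4) rfl rfl rfl rfl (by decide)
      rw [show (s(3,0) : Sym2 (Fin 5)) = s(0,3) from Sym2.eq_swap] at h
      rw [show (s(2,1) : Sym2 (Fin 5)) = s(1,2) from Sym2.eq_swap] at h
      exact h
    have P13 : ¬(σ s(1,3) = σ s(0,2) ∧ σ s(1,2) = σ s(0,4)) := by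
      have h := path_constraint hσ (v0:=3) (v1:=1) (v2:=2) (v3:=0) (v4:=4) rfl rfl rfl rfl (by decide)
      rw [show (s(3,1) : Sym2 (Fin 5)) = s(1,3) from Sym2.eq_swap] at h
      rw [show (s(2,0) : Sym2 (Fin 5)) = s(0,2) from Sym2.eq_swap] at h
      exact h
    have Q0 : ¬(σ s(0,2) = σ s(1,3) ∧ σ s(1,2) = σ s(0,3)) := by
      have h := cycle_constraint hσ (v0:=0) (v1:=2) (v2:=1) (v3:=3) rfl rfl rfl rfl (by decide) (by decide)
      rw [show (s(2,1) : Sym2 (Fin 5)) = s(1,2) from Sym2.eq_swap] at h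
      rw [show (s(3,0) : Sym2 (Fin 5)) = s(0,3) from Sym2.eq_swap] at h
      exact h
    have Q1 : ¬(σ s(0,2) = σ s(1,4) ∧ σ s(1,2) = σ s(0,4)) := by
      have h := cycle_constraint hσ (v0:=0) (v1:=2) (v2:=1) (v3:=4) rfl rfl rfl rfl (by decide) (by decide)
      rw [show (s(2,1) : Sym2 (Fin 5)) = s(1,2) from Sym2.eq_swap] at h
      rw [show (s(4,0) : Sym2 (Fin 5)) = s(0,4) from Sym2.eq_swap] at h
      exact h
    have Q2 : ¬(σ s(0,3) = σ s(1,4) ∧ σ s(1,3) = σ s(0,4)) := by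
      have h := cycle_constraint hσ (v0:=0) (v1:=3) (v2:=1) (v3:=4) rfl rfl rfl rfl (by decide) (by decide)
      rw [show (s(3,1) : Sym2 (Fin 5)) = s(1,3) from Sym2.eq_swap] at h
      rw [show (s(4,0) : Sym2 (Fin 5)) = s(0,4) from Sym2.eq_swap] at h
      exact h
    exact key5 _ _ n1 _ n2 n3 _ n4 _ n5 n6 P10 P13 Q0 _ n7 n8 n9 P8 P12 P9 P11 Q1 Q2 _ n10 n11 n12 n13 P0 P1 P4 P5 P2 P3 P6 P7
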